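/- Let X be a well-order, let α be a well-order with least element 0_α, and let (f_n) be a strictly descending sequence in α^X. Suppose x ∈ X is the immediate successor of y ∈ X, i.e., x is the least element of X with x >_X y. If the set {f_n^x : n ∈ ℕ} is finite, then the set {f_n^y : n ∈ ℕ} is finite. -/

import Mathlib

/-!
Cutting off the exponents below `z` is monotone for the lexicographic order, so `(f_n^x)` is a
non-increasing sequence with finitely many values and hence eventually constant.
Since no exponent lies strictly between `y` and `x`, `f_n^y = f_n^x ++ [(y, f_n(y))]` (with the
pair omitted when `f_n(y) = 0`). From then on `f_n^y` is therefore determined by `f_n(y)`, which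
is non-increasing in the well-order `α`, so `f_n^y` is eventually constant as well.
-/

variable {X α : Type*}

/-- The lexicographic order on `α^X` (finite sequences of pairs):
`σ < τ` iff `τ` strictly extends `σ`, or at the least index `i` where they differ,
writing `(b, a) := σ_i` and `(b', a') := τ_i`, we have `b < b'` or (`b = b'` and `a < a'`). -/
def ExpLt [LT X] [LT α] (σ τ : List (X × α)) : Prop :=
  (σ ≠ τ ∧ σ <+: τ) ∨
  ∃ (i : ℕ) (b : X) (a : α) (b' : X) (a' : α),
    σ[i]? = some (b, a) ∧ τ[i]? = some (b', a') ∧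
    (∀ j, j < i → σ[j]? = τ[j]?) ∧ (b, a) ≠ (b', a') ∧
    (b < b' ∨ (b = b' ∧ a < a'))

/-- The underlying set of the exponentiation `α^X`: finite sequences
`⟨(b_0, a_0), …, (b_{n-1}, a_{n-1})⟩` with all `a_i ≠ 0_α = ⊥` and
`b_0 >_X b_1 >_X … >_X b_{n-1}`. -/
def ExpSet (X α : Type*) [LT X] [LE α] [OrderBot α] : Set (List (X × α)) :=
  {l | (∀ p ∈ l, p.2 ≠ ⊥) ∧ l.Chain' (fun p q => q.1 < p.1)}

/-- The non-strict order on `α^X`: `σ ≤ τ` iff `σ < τ` or `σ = τ`. -/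
def ExpLe [LT X] [LT α] (σ τ : List (X × α)) : Prop :=
  ExpLt σ τ ∨ σ = τ

/-- `g^x`: the sequence obtained from `g` by removing all pairs `(y, a)` with `y <_X x`. -/
def restrictAbove [LinearOrder X] (x : X) (g : List (X × α)) : List (X × α) :=
  g.filter (fun p => decide (¬ p.1 < x))

/-- `g(x)`: the unique `a` with `(x, a) ∈ g` if it exists, and `0_α = ⊥` otherwise. -/
def eval [LinearOrder X] [LE α] [OrderBot α] (g : List (X × α)) (x : X) : α :=
  ((g.find? (fun p => decide (p.1 = x))).map Prod.snd).getD ⊥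

namespace List

variable {β : Type*} {r : β → β → Prop}

instance Lex.isStrictOrder [Std.Irrefl r] [IsTrans β r] : IsStrictOrder (List β) (Lex r) where
  irrefl := lex_irrefl irrefl
  trans _ _ _ := lex_trans (trans_of r)

theorem lex_append_left_iff [Std.Irrefl r] {s t₁ t₂ : List β} :
    Lex r (s ++ t₁) (s ++ t₂) ↔ Lex r t₁ t₂ := by
  induction s with
  | nil => rfl
  | cons a s ih => rw [cons_append, cons_append, lex_cons_iff, ih]

theorem Lex.of_isPrefix {l₁ l₂ : List β} (h : l₁ <+: l₂) (hne : l₁ ≠ l₂) : Lex r l₁ l₂ := by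
  obtain ⟨_ | ⟨b, t⟩, rfl⟩ := h
  · exact absurd (append_nil l₁).symm hne
  · simpa using Lex.append_left r (Lex.nil (a := b) (l := t)) l₁

theorem Lex.of_getElem? {l₁ l₂ : List β} {i : ℕ} {a b : β} (h₁ : l₁[i]? = some a)
    (h₂ : l₂[i]? = some b) (heq : ∀ j < i, l₁[j]? = l₂[j]?) (hab : r a b) : Lex r l₁ l₂ := by
  induction i generalizing l₁ l₂ with
  | zero =>
    cases l₁ <;> cases l₂ <;> simp_all [Lex.rel]
  | succ i ih =>
    cases l₁ <;> cases l₂ <;> simp only [getElem?_nil, getElem?_cons_succ, reduceCtorEq] at h₁ h₂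
    obtain rfl : _ = _ := by simpa using heq 0 i.succ_pos
    exact Lex.cons (ih h₁ h₂ fun j hj => by simpa using heq (j + 1) (by omega))

theorem Lex.takeWhile_or_eq {p : β → Bool} (hp : ∀ a b, r a b → p a → p b) {l₁ l₂ : List β}
    (h : Lex r l₁ l₂) :
    Lex r (l₁.takeWhile p) (l₂.takeWhile p) ∨ l₁.takeWhile p = l₂.takeWhile p := by
  induction h with
  | nil => exact lex_nil_or_eq_nil _ |>.imp id Eq.symm
  | @rel a₁ l₁ a₂ l₂ h =>
    cases ha₁ : p a₁
    · rw [takeWhile_cons_of_neg (by simp [ha₁])]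
      exact lex_nil_or_eq_nil _ |>.imp id Eq.symm
    · simp [ha₁, hp _ _ h ha₁, Lex.rel h]
  | @cons a l₁ l₂ h ih =>
    cases ha : p a
    · simp [ha]
    · rw [takeWhile_cons_of_pos ha, takeWhile_cons_of_pos ha]
      exact ih.imp Lex.cons (congrArg _)

theorem Pairwise.filter_eq_takeWhile {R : β → β → Prop} {p : β → Bool}
    (hp : ∀ a b, R a b → p b → p a) {l : List β} (hl : l.Pairwise R) :
    l.filter p = l.takeWhile p := by
  induction l with
  | nil => rfl
  | cons a l ih =>
    rw [pairwise_cons] at hl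
    cases ha : p a
    · simp only [filter_cons, takeWhile_cons, ha]
      exact filter_eq_nil_iff.2 fun b hb hpb => by simpa [ha] using hp a b (hl.1 b hb) hpb
    · simp [ha, ih hl.2]

end List

section EventuallyConstant

variable {β : Type*} {r : β → β → Prop}

theorem exists_forall_ge_eq_of_wellFoundedOn {u : ℕ → β} {N : ℕ}
    (hu : ∀ n ≥ N, r (u (n + 1)) (u n) ∨ u (n + 1) = u n)
    (hwf : (u '' Set.Ici N).WellFoundedOn r) : ∃ M, ∀ n ≥ M, u n = u M := by
  obtain ⟨⟨_, M, hM, rfl⟩, -, hmin⟩ :=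
    hwf.has_min Set.univ ⟨⟨u N, N, Set.self_mem_Ici, rfl⟩, trivial⟩
  refine ⟨M, fun n hn => ?_⟩
  induction n, hn using Nat.le_induction with
  | base => rfl
  | succ n hMn ih =>
    have hmem : n + 1 ∈ Set.Ici N := le_trans hM (Nat.le_succ_of_le hMn)
    refine ((hu n (le_trans hM hMn)).resolve_left fun h => ?_).trans ih
    rw [ih] at h
    exact hmin ⟨u (n + 1), n + 1, hmem, rfl⟩ trivial h

theorem Set.finite_range_of_forall_ge_eq {u : ℕ → β} {M : ℕ} (h : ∀ n ≥ M, u n = u M) :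
    (Set.range u).Finite := by
  refine ((Set.finite_Iic M).image u).subset ?_
  rintro _ ⟨n, rfl⟩
  rcases le_total n M with hn | hn
  · exact ⟨n, hn, rfl⟩
  · exact ⟨M, Set.self_mem_Iic, (h n hn).symm⟩

end EventuallyConstant

section Exponentiation

variable [LinearOrder X]

theorem restrictAbove_eq_nil {z : X} {g : List (X × α)} (h : ∀ p ∈ g, p.1 < z) :
    restrictAbove z g = [] :=
  List.filter_eq_nil_iff.2 fun p hp => by simpa using h p hp

variable [LinearOrder α]

theorem ExpLt.lex {σ τ : List (X × α)} (h : ExpLt σ τ) :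
    List.Lex (Prod.Lex (· < ·) (· < ·)) σ τ := by
  rcases h with ⟨hne, hpre⟩ | ⟨i, b, a, b', a', hσ, hτ, heq, -, hlt⟩
  · exact .of_isPrefix hpre hne
  · exact .of_getElem? hσ hτ heq (Prod.lex_def.2 hlt)

variable [OrderBot α]

theorem pairwise_of_mem_expSet {g : List (X × α)} (hg : g ∈ ExpSet X α) :
    g.Pairwise fun p q => q.1 < p.1 :=
  List.isChain_iff_pairwise.1 hg.2

theorem restrictAbove_eq_takeWhile (z : X) {g : List (X × α)} (hg : g ∈ ExpSet X α) :
    restrictAbove z g = g.takeWhile fun p => decide (¬ p.1 < z) :=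
  (pairwise_of_mem_expSet hg).filter_eq_takeWhile fun _ _ hqp hq => by
    simp only [decide_eq_true_eq, not_lt] at hq ⊢
    exact hq.trans hqp.le

theorem restrictAbove_lex_or_eq (z : X) {σ τ : List (X × α)} (hσ : σ ∈ ExpSet X α)
    (hτ : τ ∈ ExpSet X α) (h : List.Lex (Prod.Lex (· < ·) (· < ·)) σ τ) :
    List.Lex (Prod.Lex (· < ·) (· < ·)) (restrictAbove z σ) (restrictAbove z τ) ∨
      restrictAbove z σ = restrictAbove z τ := by
  rw [restrictAbove_eq_takeWhile z hσ, restrictAbove_eq_takeWhile z hτ]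
  refine h.takeWhile_or_eq fun p q hpq hp => ?_
  simp only [decide_eq_true_eq, not_lt] at hp ⊢
  rcases Prod.lex_def.1 hpq with h | ⟨h, -⟩
  · exact hp.trans h.le
  · exact h ▸ hp

def expMonomial (y : X) (c : α) : List (X × α) :=
  if c = ⊥ then [] else [(y, c)]

theorem lt_of_lex_expMonomial {y : X} {c d : α}
    (h : List.Lex (Prod.Lex (· < ·) (· < ·)) (expMonomial y c) (expMonomial y d)) : c < d := by
  unfold expMonomial at h
  split_ifs at h with hc hd hd
  · exact absurd h List.not_lex_nil
  · exact hc ▸ bot_lt_iff_ne_bot.2 hd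
  · exact absurd h List.not_lex_nil
  · simpa [Prod.lex_def] using h

theorem restrictAbove_eq_append_expMonomial {x y : X} (hyx : y < x)
    (hsucc : ∀ z, y < z → x ≤ z) {g : List (X × α)} (hg : g ∈ ExpSet X α) :
    ∃ c, restrictAbove y g = restrictAbove x g ++ expMonomial y c := by
  have hpw := pairwise_of_mem_expSet hg
  obtain ⟨hbot, -⟩ := hg
  induction g with
  | nil => exact ⟨⊥, by simp [restrictAbove, expMonomial]⟩
  | cons p g ih =>
    obtain ⟨hltp, hpw⟩ := List.pairwise_cons.1 hpw
    by_cases hpx : p.1 < x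
    · have hx : restrictAbove x (p :: g) = [] := restrictAbove_eq_nil fun q hq =>
        (List.mem_cons.1 hq).elim (· ▸ hpx) fun hq => (hltp q hq).trans hpx
      rcases (not_lt.1 fun h => (hsucc _ h).not_gt hpx).lt_or_eq with hpy | rfl
      · refine ⟨⊥, ?_⟩
        rw [hx, restrictAbove_eq_nil fun q hq => (List.mem_cons.1 hq).elim (· ▸ hpy)
          fun hq => (hltp q hq).trans hpy]
        simp [expMonomial]
      · refine ⟨p.2, ?_⟩
        rw [hx, restrictAbove, List.filter_cons_of_pos (by simp), List.filter_eq_nil_iff.2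
          fun q hq => by simpa using hltp q hq]
        simp [expMonomial, hbot p List.mem_cons_self]
    · have hpy : ¬ p.1 < y := fun h => hpx (h.trans hyx)
      obtain ⟨c, hc⟩ := ih hpw fun q hq => hbot q (List.mem_cons_of_mem p hq)
      refine ⟨c, ?_⟩
      simp only [restrictAbove] at hc ⊢
      rw [List.filter_cons_of_pos (by simpa using hpy),
        List.filter_cons_of_pos (by simpa using hpx), hc, List.cons_append]

theorem wellFoundedOn_range_append_expMonomial [WellFoundedLT α] (G : List (X × α)) (y : X) :
    (Set.range fun c => G ++ expMonomial y c).WellFoundedOn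
      (List.Lex (Prod.Lex (· < ·) (· < ·))) :=
  Set.wellFoundedOn_range.2 <| Subrelation.wf
    (fun h => lt_of_lex_expMonomial (List.lex_append_left_iff.1 h)) wellFounded_lt

end Exponentiation

theorem successor_case_general [LinearOrder X]
    [LinearOrder α] [OrderBot α] [WellFoundedLT α]
    (f : ℕ → List (X × α)) (hf : ∀ n, f n ∈ ExpSet X α)
    (hdesc : ∀ n, ExpLt (f (n + 1)) (f n))
    (x y : X) (hyx : y < x) (hsucc : ∀ z : X, y < z → x ≤ z)
    (hfin : (Set.range fun n => restrictAbove x (f n)).Finite) :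
    (Set.range fun n => restrictAbove y (f n)).Finite := by
  have hmono (z : X) (n : ℕ) := restrictAbove_lex_or_eq z (hf (n + 1)) (hf n) (hdesc n).lex
  obtain ⟨N, hN⟩ := exists_forall_ge_eq_of_wellFoundedOn (N := 0) (fun n _ => hmono x n)
    (hfin.subset (Set.image_subset_range _ _)).wellFoundedOn
  have htail : (fun n => restrictAbove y (f n)) '' Set.Ici N ⊆
      Set.range fun c => restrictAbove x (f N) ++ expMonomial y c := by
    rintro _ ⟨n, hn, rfl⟩
    obtain ⟨c, hc⟩ := restrictAbove_eq_append_expMonomial hyx hsucc (hf n)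
    exact ⟨c, by dsimp only; rw [hc, hN n hn]⟩
  obtain ⟨M, hM⟩ := exists_forall_ge_eq_of_wellFoundedOn (fun n _ => hmono y n)
    ((wellFoundedOn_range_append_expMonomial _ y).subset htail)
  exact Set.finite_range_of_forall_ge_eq hM

/-- Successor case: if `x` is the immediate successor of `y` in `X` and, for a strictly
descending sequence `(f_n)` in `α^X`, the set `{f_n^x : n ∈ ℕ}` is finite, then
`{f_n^y : n ∈ ℕ}` is finite. -/
theorem successor_case [LinearOrder X] [WellFoundedLT X]
    [LinearOrder α] [OrderBot α] [WellFoundedLT α]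
    (f : ℕ → List (X × α)) (hf : ∀ n, f n ∈ ExpSet X α)
    (hdesc : ∀ n, ExpLt (f (n + 1)) (f n))
    (x y : X) (hyx : y < x) (hsucc : ∀ z : X, y < z → x ≤ z)
    (hfin : (Set.range fun n => restrictAbove x (f n)).Finite) :
    (Set.range fun n => restrictAbove y (f n)).Finite :=
  successor_case_general f hf hdesc x y hyx hsucc hfin
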